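/- Let m > k > 0 be integers and let a be a real number with |a| < 1. Then for every real ξ with 0 < |ξ| < 1, the derivative with respect to ξ of the function ξ ↦ S(a,ξ)/ξ satisfies: 4·(1−ξ²)·d[S(a,ξ)/ξ]/dξ = (1−a²)^{m+1}·F(ξ), where F(ξ) = 4·(1−a²)^{−m−1}·[(ma+k)·a·ξ^{−2} − (ka+m)]·(1−ξ²)^m. -/

import Mathlib

/-- The polynomial S(a,ξ) = Σ_{j=0}^m [(−1)^j ξ^{2j}/(2j−1)]·
[C(m−1,j)(ma+k)a + C(m−1,j−1)(ka+m)], with C(m−1,j) = 0 for j < 0 or j ≥ m. -/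
noncomputable def Spoly (m k : ℕ) (a ξ : ℝ) : ℝ :=
  ∑ j ∈ Finset.range (m + 1),
    ((-1 : ℝ) ^ j * ξ ^ (2 * j) / (2 * (j : ℝ) - 1)) *
      ((Nat.choose (m - 1) j : ℝ) * ((m : ℝ) * a + (k : ℝ)) * a
        + (if j = 0 then 0 else (Nat.choose (m - 1) (j - 1) : ℝ))
            * ((k : ℝ) * a + (m : ℝ)))

/-- F(ξ) = 4·(1−a²)^{−m−1}·[(ma+k)·a·ξ^{−2} − (ka+m)]·(1−ξ²)^m. -/
noncomputable def Frat (m k : ℕ) (a ξ : ℝ) : ℝ :=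
  4 * ((1 - a ^ 2) ^ (m + 1))⁻¹
    * (((m : ℝ) * a + (k : ℝ)) * a * (ξ ^ 2)⁻¹ - ((k : ℝ) * a + (m : ℝ)))
    * (1 - ξ ^ 2) ^ m


/-! Write `S(a,ξ) = ∑ⱼ (-1)ʲ Bⱼ ξ^{2j}/(2j-1)` with `Bⱼ = C(m-1,j) P + C(m-1,j-1) Q`,
`P = (ma+k)a`, `Q = ka+m`. Termwise, `S/ξ` has derivative `ξ⁻² ∑ⱼ Bⱼ (-ξ²)ʲ`, and `Bⱼ` is the
`j`-th coefficient of `(P + Qx)(1+x)^{m-1}`, so the derivative is `ξ⁻² (P - Qξ²)(1-ξ²)^{m-1}`.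
Multiplying by `4(1-ξ²)` gives `(1-a²)^{m+1} F(ξ)`. -/

section BinomialSums

variable {R : Type*} [CommRing R]

theorem sum_range_choose_mul_pow_of_lt {n N : ℕ} (h : n < N) (x : R) :
    ∑ j ∈ Finset.range N, (n.choose j : R) * x ^ j = (1 + x) ^ n := by
  rw [add_comm, add_pow, ← Finset.sum_range_add_sum_Ico _ h]
  simp only [one_pow, mul_one, mul_comm]
  rw [add_eq_left]
  exact Finset.sum_eq_zero fun j hj => by
    simp [Nat.choose_eq_zero_of_lt (Finset.mem_Ico.1 hj).1]

theorem sum_range_choose_mul_add_choose_pred_mul_pow (n : ℕ) (P Q x : R) :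
    ∑ j ∈ Finset.range (n + 2),
        ((n.choose j : R) * P + (if j = 0 then 0 else (n.choose (j - 1) : R)) * Q) * x ^ j
      = (P + x * Q) * (1 + x) ^ n := by
  have hpred : ∑ j ∈ Finset.range (n + 2),
      (if j = 0 then 0 else (n.choose (j - 1) : R)) * x ^ j = x * (1 + x) ^ n := by
    rw [Finset.sum_range_succ', ← sum_range_choose_mul_pow_of_lt (Nat.lt_succ_self n),
      Finset.mul_sum]
    simp only [Nat.add_one_ne_zero, if_false, if_true, Nat.add_sub_cancel, zero_mul, add_zero,
      pow_succ]
    exact Finset.sum_congr rfl fun j _ => by ring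
  calc _ = (∑ j ∈ Finset.range (n + 2), (n.choose j : R) * x ^ j) * P
        + (∑ j ∈ Finset.range (n + 2),
            (if j = 0 then 0 else (n.choose (j - 1) : R)) * x ^ j) * Q := by
        simp only [add_mul, Finset.sum_add_distrib, Finset.sum_mul]
        congr 1 <;> exact Finset.sum_congr rfl fun j _ => by ring
    _ = (P + x * Q) * (1 + x) ^ n := by
        rw [sum_range_choose_mul_pow_of_lt (by omega), hpred]
        ring

end BinomialSums

theorem hasDerivAt_pow_two_mul_div_div_self (j : ℕ) {ξ : ℝ} (hξ : ξ ≠ 0) :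
    HasDerivAt (fun u : ℝ => u ^ (2 * j) / (2 * j - 1) / u) (ξ ^ (2 * j) / ξ ^ 2) ξ := by
  have hj : (2 * j - 1 : ℝ) ≠ 0 := sub_ne_zero.mpr (by exact_mod_cast (by omega : 2 * j ≠ 1))
  have hz := (hasDerivAt_zpow (((2 * j : ℕ) : ℤ) - 1) ξ (Or.inl hξ)).div_const (2 * j - 1 : ℝ)
  refine (hz.congr_of_eventuallyEq ?_).congr_deriv ?_
  · filter_upwards [eventually_ne_nhds hξ] with u hu
    rw [zpow_sub_one₀ hu, zpow_natCast]
    ring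
  · rw [sub_sub, zpow_sub₀ hξ, zpow_natCast]
    push_cast
    field_simp

noncomputable def spolyCoeff (m k : ℕ) (a : ℝ) (j : ℕ) : ℝ :=
  ((m - 1).choose j : ℝ) * (((m : ℝ) * a + k) * a)
    + (if j = 0 then 0 else ((m - 1).choose (j - 1) : ℝ)) * ((k : ℝ) * a + m)

section Spoly

variable (m k : ℕ) (a : ℝ)

theorem Spoly_eq_sum (ξ : ℝ) :
    Spoly m k a ξ
      = ∑ j ∈ Finset.range (m + 1), (-1) ^ j * spolyCoeff m k a j * (ξ ^ (2 * j) / (2 * j - 1)) :=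
  Finset.sum_congr rfl fun j _ => by simp only [spolyCoeff]; ring

variable {m}

theorem sum_neg_one_pow_mul_spolyCoeff_mul_pow (hm : m ≠ 0) (ξ : ℝ) :
    ∑ j ∈ Finset.range (m + 1), (-1) ^ j * spolyCoeff m k a j * ξ ^ (2 * j)
      = (((m : ℝ) * a + k) * a - ξ ^ 2 * ((k : ℝ) * a + m)) * (1 - ξ ^ 2) ^ (m - 1) := by
  obtain ⟨n, rfl⟩ := Nat.exists_eq_add_one_of_ne_zero hm
  have h := sum_range_choose_mul_add_choose_pred_mul_pow n
    ((((n + 1 : ℕ) : ℝ) * a + k) * a) ((k : ℝ) * a + (n + 1 : ℕ)) (-ξ ^ 2)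
  rw [Nat.add_sub_cancel]
  convert h using 1
  · refine Finset.sum_congr rfl fun j _ => ?_
    rw [spolyCoeff, Nat.add_sub_cancel, neg_pow, pow_mul]
    ring
  · ring

theorem hasDerivAt_Spoly_div_self (hm : m ≠ 0) {ξ : ℝ} (hξ : ξ ≠ 0) :
    HasDerivAt (fun u => Spoly m k a u / u)
      ((((m : ℝ) * a + k) * a - ξ ^ 2 * ((k : ℝ) * a + m)) * (1 - ξ ^ 2) ^ (m - 1) / ξ ^ 2) ξ := by
  have h := HasDerivAt.fun_sum (u := Finset.range (m + 1)) fun j _ =>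
    (hasDerivAt_pow_two_mul_div_div_self j hξ).const_mul ((-1) ^ j * spolyCoeff m k a j)
  rw [← sum_neg_one_pow_mul_spolyCoeff_mul_pow k a hm, Finset.sum_div]
  refine (h.congr_deriv ?_).congr_of_eventuallyEq (.of_forall fun u => ?_)
  · simp_rw [mul_div_assoc]
  · simp_rw [Spoly_eq_sum, Finset.sum_div, mul_div_assoc]

end Spoly

theorem stmt_13_general (m k : ℕ) (hkm : k < m) (a : ℝ) (ha : |a| < 1) :
    ∀ ξ : ℝ, 0 < |ξ| → |ξ| < 1 →
      4 * (1 - ξ ^ 2) * deriv (fun u => Spoly m k a u / u) ξ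
        = (1 - a ^ 2) ^ (m + 1) * Frat m k a ξ := by
  intro ξ hξ _
  have hξ0 : ξ ≠ 0 := abs_pos.mp hξ
  have hm : m ≠ 0 := by omega
  have ha2 : 1 - a ^ 2 ≠ 0 := sub_ne_zero.mpr ((sq_lt_one_iff_abs_lt_one a).mpr ha).ne'
  rw [(hasDerivAt_Spoly_div_self k a hm hξ0).deriv, Frat, ← pow_sub_one_mul hm]
  field_simp

/-- 4·(1−ξ²)·d[S(a,ξ)/ξ]/dξ = (1−a²)^{m+1}·F(ξ) for 0 < |ξ| < 1. -/
theorem stmt_13 (m k : ℕ) (hk : 0 < k) (hkm : k < m) (a : ℝ) (ha : |a| < 1) :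
    ∀ ξ : ℝ, 0 < |ξ| → |ξ| < 1 →
      4 * (1 - ξ ^ 2) * deriv (fun u => Spoly m k a u / u) ξ
        = (1 - a ^ 2) ^ (m + 1) * Frat m k a ξ :=
  stmt_13_general m k hkm a ha
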